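/- Let f(x) = sin(x)(1 - 1/(8 sin(x/2)^3)) and θ_c its unique critical point in (0, π). Let C = {x₁, ..., x_m} with all xᵢ > 0 and x₁ + ... + x_m ≤ 2π. Let A₁, A₂, B₁, B₂ be nonempty subsets of C with A₁ ∪ A₂ = B₁ ∪ B₂ = C (as disjoint unions/partitions) and B₁ ⊊ A₁. If f(Σ_{A₁} xᵢ) = f(Σ_{A₂} xᵢ) and f(Σ_{B₁} xᵢ) = f(Σ_{B₂} xᵢ), then Σ_{C} xᵢ > 2θ_c > 6π/5, and exactly one of the following holds: Σ_{A₁} xᵢ = Σ_{A₂} xᵢ, or Σ_{B₁} xᵢ = Σ_{B₂} xᵢ, or Σ_{A₁} xᵢ = Σ_{B₂} xᵢ. -/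

import Mathlib

/-!
On `(0, 2π)` one has `f''' > 0`, so `f''` is strictly increasing; as `f''(π) = 0`,
`f'` is strictly decreasing on `(0, π]`, and `f'(3π/5) = (13√5 - 29)/8 > 0` puts `θ_c`
beyond `3π/5`.

Fix the total `S ≤ 2π`. The derivative of `z ↦ f z - f (S - z)` is `f' z + f' (S - z)`,
which is strictly decreasing on `(0, S/2]` because `f''` is increasing. By Rolle, the
function therefore has at most one zero in `(0, S/2)` besides the trivial one at `S/2`:
two balanced splits of `S` with unequal parts agree up to swapping the parts, which is the
trichotomy. A single such split yields `ξ < S/2` with `f' ξ + f' (S - ξ) = 0`, hence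
`f' (S/2) < 0` and `S/2 > θ_c`.
-/

open Real Set

noncomputable def f (x : ℝ) : ℝ := Real.sin x * (1 - 1 / (8 * (Real.sin (x/2))^3))

noncomputable def f' (x : ℝ) : ℝ :=
  1 - 2 * sin (x / 2) ^ 2 + (2 - sin (x / 2) ^ 2) / (8 * sin (x / 2) ^ 3)

noncomputable def f'' (x : ℝ) : ℝ :=
  cos (x / 2) * (sin (x / 2) ^ 2 - 32 * sin (x / 2) ^ 5 - 6) / (16 * sin (x / 2) ^ 4)

noncomputable def f''' (x : ℝ) : ℝ :=
  (24 - 20 * sin (x / 2) ^ 2 + sin (x / 2) ^ 4 - 32 * sin (x / 2) ^ 5 + 64 * sin (x / 2) ^ 7) /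
    (32 * sin (x / 2) ^ 5)

lemma sin_eq_two_mul_sin_half_mul_cos_half (x : ℝ) : sin x = 2 * sin (x / 2) * cos (x / 2) := by
  rw [← sin_two_mul, mul_div_cancel₀ _ two_ne_zero]

lemma cos_eq_one_sub_two_mul_sin_half_sq (x : ℝ) : cos x = 1 - 2 * sin (x / 2) ^ 2 := by
  rw [← cos_two_mul_eq_one_sub, mul_div_cancel₀ _ two_ne_zero]

lemma sin_half_pos {x : ℝ} (hx : x ∈ Ioo 0 (2 * π)) : 0 < sin (x / 2) :=
  sin_pos_of_pos_of_lt_pi (by linarith [hx.1]) (by linarith [hx.2])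

lemma hasDerivAt_sin_half (x : ℝ) : HasDerivAt (fun y => sin (y / 2)) (cos (x / 2) / 2) x :=
  ((hasDerivAt_id' x).div_const 2).sin.congr_deriv (by ring)

lemma hasDerivAt_cos_half (x : ℝ) : HasDerivAt (fun y => cos (y / 2)) (-sin (x / 2) / 2) x :=
  ((hasDerivAt_id' x).div_const 2).cos.congr_deriv (by ring)

lemma hasDerivAt_f {x : ℝ} (hx : x ∈ Ioo 0 (2 * π)) : HasDerivAt f (f' x) x := by
  have hs := sin_half_pos hx
  have h : HasDerivAt (fun y => sin y * (1 - 1 / (8 * sin (y / 2) ^ 3))) _ x :=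
    (hasDerivAt_sin x).mul ((hasDerivAt_const x 1).sub
    ((hasDerivAt_const x 1).div (((hasDerivAt_sin_half x).pow 3).const_mul 8) (by positivity)))
  refine h.congr_deriv ?_
  rw [f', sin_eq_two_mul_sin_half_mul_cos_half x, cos_eq_one_sub_two_mul_sin_half_sq x]
  field_simp
  linear_combination 3 * sin (x / 2) ^ 2 * sin_sq_add_cos_sq (x / 2)

lemma hasDerivAt_f' {x : ℝ} (hx : x ∈ Ioo 0 (2 * π)) : HasDerivAt f' (f'' x) x := by
  have hs := sin_half_pos hx
  have hs' := hasDerivAt_sin_half x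
  have h : HasDerivAt
      (fun y => 1 - 2 * sin (y / 2) ^ 2 + (2 - sin (y / 2) ^ 2) / (8 * sin (y / 2) ^ 3)) _ x :=
    (((hasDerivAt_const x 1).sub ((hs'.pow 2).const_mul 2)).add
    (((hasDerivAt_const x 2).sub (hs'.pow 2)).div ((hs'.pow 3).const_mul 8) (by positivity)))
  refine h.congr_deriv ?_
  rw [f'']
  simp only [Pi.sub_apply, Pi.pow_apply]
  field_simp
  ring

lemma hasDerivAt_f'' {x : ℝ} (hx : x ∈ Ioo 0 (2 * π)) : HasDerivAt f'' (f''' x) x := by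
  have hs := sin_half_pos hx
  have hs' := hasDerivAt_sin_half x
  have h : HasDerivAt (fun y =>
      cos (y / 2) * (sin (y / 2) ^ 2 - 32 * sin (y / 2) ^ 5 - 6) / (16 * sin (y / 2) ^ 4)) _ x :=
    ((hasDerivAt_cos_half x).mul (((hs'.pow 2).sub ((hs'.pow 5).const_mul 32)).sub_const 6)).div
    ((hs'.pow 4).const_mul 16) (by positivity)
  refine h.congr_deriv ?_
  rw [f''']
  simp only [Pi.sub_apply, Pi.pow_apply, Pi.mul_apply]
  field_simp
  linear_combination (768 * sin (x / 2) ^ 3 - 64 * sin (x / 2) ^ 5 - 1024 * sin (x / 2) ^ 8) *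
    sin_sq_add_cos_sq (x / 2)

lemma f'''_pos {x : ℝ} (hx : x ∈ Ioo 0 (2 * π)) : 0 < f''' x := by
  have hs := sin_half_pos hx
  have hs1 := sin_le_one (x / 2)
  refine div_pos ?_ (by positivity)
  -- `64 s⁷ - 32 s⁵ = s³ (8 s² - 2)² - 4 s³` and `24 - 4 s³ - 20 s² ≥ 0` for `s ≤ 1`
  nlinarith [mul_nonneg (pow_nonneg hs.le 3) (sq_nonneg (8 * sin (x / 2) ^ 2 - 2)), pow_pos hs 4,
    pow_pos hs 3, mul_pos hs hs]

lemma strictMonoOn_f'' : StrictMonoOn f'' (Ioo 0 (2 * π)) :=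
  strictMonoOn_of_deriv_pos (convex_Ioo _ _)
    (fun _ hx => (hasDerivAt_f'' hx).continuousAt.continuousWithinAt)
    (fun x hx => by
      rw [interior_Ioo] at hx
      rw [(hasDerivAt_f'' hx).deriv]
      exact f'''_pos hx)

lemma f''_neg {x : ℝ} (hx : x ∈ Ioo 0 π) : f'' x < 0 := by
  have hf''π : f'' π = 0 := by simp [f'', cos_pi_div_two]
  exact hf''π ▸
    strictMonoOn_f'' ⟨hx.1, by linarith [hx.2, pi_pos]⟩ ⟨pi_pos, by linarith [pi_pos]⟩ hx.2

lemma strictAntiOn_f' : StrictAntiOn f' (Ioc 0 π) :=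
  strictAntiOn_of_deriv_neg (convex_Ioc _ _)
    (fun _ hx => (hasDerivAt_f' ⟨hx.1, by linarith [hx.2, pi_pos]⟩).continuousAt.continuousWithinAt)
    (fun x hx => by
      rw [interior_Ioc] at hx
      rw [(hasDerivAt_f' ⟨hx.1, by linarith [hx.2, pi_pos]⟩).deriv]
      exact f''_neg hx)

lemma f'_three_pi_div_five_pos : 0 < f' (3 * π / 5) := by
  have hsin : sin (3 * π / 5 / 2) = (1 + √5) / 4 := by
    rw [show 3 * π / 5 / 2 = π / 2 - π / 5 by ring, sin_pi_div_two_sub, cos_pi_div_five]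
  have hr : √5 ^ 2 = 5 := sq_sqrt (by norm_num)
  have hr2 : 2 < √5 := by nlinarith [sqrt_nonneg 5]
  have hval : f' (3 * π / 5) = (13 * √5 - 29) / 8 := by
    rw [f', hsin]
    field_simp
    linear_combination (-16 * √5 ^ 3 - 288 * √5 ^ 2 - 272 * √5 - 512) * hr
  rw [hval]
  nlinarith

lemma three_pi_div_five_lt_of_f'_eq_zero {θ : ℝ} (hθ : θ ∈ Ioo 0 π) (hθ' : f' θ = 0) :
    3 * π / 5 < θ := by
  by_contra! h
  have := strictAntiOn_f'.antitoneOn ⟨hθ.1, hθ.2.le⟩ ⟨by positivity, by linarith [pi_pos]⟩ h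
  linarith [f'_three_pi_div_five_pos]

section Reflection

variable {S : ℝ}

lemma hasDerivAt_f_sub_f_reflect (hS : S ≤ 2 * π) {y : ℝ} (hy : y ∈ Ioo 0 S) :
    HasDerivAt (fun z => f z - f (S - z)) (f' y + f' (S - y)) y := by
  have h := (hasDerivAt_f ⟨hy.1, by linarith [hy.2]⟩).sub
    ((hasDerivAt_f ⟨by linarith [hy.2], by linarith [hy.1]⟩).comp_const_sub S y)
  exact h.congr_deriv (sub_neg_eq_add _ _)

lemma continuousOn_f_sub_f_reflect (hS : S ≤ 2 * π) :
    ContinuousOn (fun z => f z - f (S - z)) (Ioo 0 S) :=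
  fun _ hy => (hasDerivAt_f_sub_f_reflect hS hy).continuousAt.continuousWithinAt

lemma strictAntiOn_f'_add_f'_reflect (hS : S ≤ 2 * π) :
    StrictAntiOn (fun y => f' y + f' (S - y)) (Ioc 0 (S / 2)) := by
  have hderiv : ∀ y ∈ Ioc 0 (S / 2),
      HasDerivAt (fun y => f' y + f' (S - y)) (f'' y - f'' (S - y)) y := fun y hy =>
    ((hasDerivAt_f' ⟨hy.1, by linarith [hy.1, hy.2]⟩).add
      ((hasDerivAt_f' ⟨by linarith [hy.1, hy.2], by linarith [hy.1]⟩).comp_const_sub S y)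
      ).congr_deriv (sub_eq_add_neg _ _).symm
  refine strictAntiOn_of_deriv_neg (convex_Ioc _ _)
    (fun y hy => (hderiv y hy).continuousAt.continuousWithinAt) (fun y hy => ?_)
  rw [interior_Ioc] at hy
  rw [(hderiv y (Ioo_subset_Ioc_self hy)).deriv, sub_neg]
  exact strictMonoOn_f'' ⟨hy.1, by linarith [hy.1, hy.2]⟩
    ⟨by linarith [hy.1, hy.2], by linarith [hy.1]⟩ (by linarith [hy.2])

lemma exists_f'_add_f'_reflect_eq_zero (hS : S ≤ 2 * π) {a b : ℝ} (ha : 0 < a) (hab : a < b)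
    (hb : b ≤ S / 2) (hfa : f a = f (S - a)) (hfb : f b = f (S - b)) :
    ∃ ξ ∈ Ioo a b, f' ξ + f' (S - ξ) = 0 :=
  exists_hasDerivAt_eq_zero hab
    ((continuousOn_f_sub_f_reflect hS).mono fun _ hy => ⟨by linarith [hy.1], by linarith [hy.2]⟩)
    (by rw [hfa, hfb, sub_self, sub_self])
    (fun _ hy => hasDerivAt_f_sub_f_reflect hS ⟨by linarith [hy.1], by linarith [hy.2]⟩)

lemma eq_of_f_eq_f_reflect (hS : S ≤ 2 * π) {u v : ℝ} (hu : u ∈ Ioo 0 (S / 2))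
    (hv : v ∈ Ioo 0 (S / 2)) (hfu : f u = f (S - u)) (hfv : f v = f (S - v)) : u = v := by
  by_contra hne
  wlog huv : u < v generalizing u v
  · exact this hv hu hfv hfu (Ne.symm hne) (lt_of_le_of_ne (not_lt.1 huv) (Ne.symm hne))
  have hhalf : f (S / 2) = f (S - S / 2) := by ring_nf
  obtain ⟨ξ, hξ, hξ0⟩ := exists_f'_add_f'_reflect_eq_zero hS hu.1 huv hv.2.le hfu hfv
  obtain ⟨η, hη, hη0⟩ := exists_f'_add_f'_reflect_eq_zero hS hv.1 hv.2 le_rfl hfv hhalf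
  exact (strictAntiOn_f'_add_f'_reflect hS ⟨hξ.1.trans' hu.1, by linarith [hξ.2, hv.2]⟩
    ⟨hη.1.trans' hv.1, hη.2.le⟩ (hξ.2.trans hη.1)).ne' (hξ0.trans hη0.symm)

lemma min_reflect_mem_Ioo {p : ℝ} (hp : p ∈ Ioo 0 S) (hp' : p ≠ S - p) :
    min p (S - p) ∈ Ioo 0 (S / 2) := by
  rcases hp'.lt_or_gt with h | h
  · rw [min_eq_left h.le]; exact ⟨hp.1, by linarith⟩
  · rw [min_eq_right h.le]; exact ⟨by linarith [hp.2], by linarith⟩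

lemma f_min_reflect {p : ℝ} (hfp : f p = f (S - p)) :
    f (min p (S - p)) = f (S - min p (S - p)) := by
  rcases min_choice p (S - p) with h | h <;> rw [h]
  · exact hfp
  · rw [sub_sub_cancel, hfp]

lemma two_mul_lt_of_f_eq_f_reflect {θ : ℝ} (hθ : θ ∈ Ioo 0 π) (hθ' : f' θ = 0)
    (hS : S ≤ 2 * π) {p : ℝ} (hp : p ∈ Ioo 0 S) (hp' : p ≠ S - p) (hfp : f p = f (S - p)) :
    2 * θ < S := by
  have hu := min_reflect_mem_Ioo hp hp'
  have hhalf : f (S / 2) = f (S - S / 2) := by ring_nf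
  obtain ⟨ξ, hξ, hξ0⟩ :=
    exists_f'_add_f'_reflect_eq_zero hS hu.1 hu.2 le_rfl (f_min_reflect hfp) hhalf
  have hneg : f' (S / 2) < 0 := by
    have := strictAntiOn_f'_add_f'_reflect hS ⟨hξ.1.trans' hu.1, hξ.2.le⟩
      ⟨hu.1.trans hu.2, le_rfl⟩ hξ.2
    simp only [sub_half] at this
    linarith
  by_contra! hθS
  have := strictAntiOn_f'.antitoneOn ⟨hu.1.trans hu.2, by linarith⟩ ⟨hθ.1, hθ.2.le⟩
    (by linarith : S / 2 ≤ θ)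
  linarith

lemma eq_or_eq_reflect_of_f_eq_f_reflect (hS : S ≤ 2 * π) {p q : ℝ} (hp : p ∈ Ioo 0 S)
    (hq : q ∈ Ioo 0 S) (hp' : p ≠ S - p) (hq' : q ≠ S - q) (hfp : f p = f (S - p))
    (hfq : f q = f (S - q)) : p = q ∨ p = S - q := by
  have h := eq_of_f_eq_f_reflect hS (min_reflect_mem_Ioo hp hp') (min_reflect_mem_Ioo hq hq')
    (f_min_reflect hfp) (f_min_reflect hfq)
  rcases min_choice p (S - p) with hmp | hmp <;> rcases min_choice q (S - q) with hmq | hmq <;>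
    rw [hmp, hmq] at h
  exacts [Or.inl h, Or.inr h, Or.inr (by linarith), Or.inl (by linarith)]

lemma f_reflect_trichotomy (hS : S ≤ 2 * π) {a b : ℝ} (hb : 0 < b) (hba : b < a) (haS : a < S)
    (hfa : f a = f (S - a)) (hfb : f b = f (S - b)) : a = S - a ∨ b = S - b ∨ a = S - b := by
  by_contra! h
  rcases eq_or_eq_reflect_of_f_eq_f_reflect hS ⟨hb.trans hba, haS⟩ ⟨hb, hba.trans haS⟩ h.1 h.2.1
    hfa hfb with h' | h'
  exacts [hba.ne' h', h.2.2 h']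

end Reflection

lemma sum_eq_sum_univ_sub_of_union_eq_univ {ι M : Type*} [Fintype ι] [DecidableEq ι]
    [AddCommGroup M] {s t : Finset ι} (hst : s ∪ t = Finset.univ) (hd : Disjoint s t) (g : ι → M) :
    ∑ i ∈ t, g i = ∑ i, g i - ∑ i ∈ s, g i := by
  rw [← hst, Finset.sum_union hd, add_sub_cancel_left]

theorem stmt11_general (θc : ℝ) (hθc : θc ∈ Ioo (0:ℝ) π) (hcrit : deriv f θc = 0)
    (m : ℕ) (x : Fin m → ℝ) (hx : ∀ i, 0 < x i)
    (hsum : ∑ i, x i ≤ 2*π)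
    (A₁ A₂ B₁ B₂ : Finset (Fin m))
    (hA₂ : A₂.Nonempty) (hB₁ : B₁.Nonempty)
    (hAunion : A₁ ∪ A₂ = Finset.univ) (hAdisj : Disjoint A₁ A₂)
    (hBunion : B₁ ∪ B₂ = Finset.univ) (hBdisj : Disjoint B₁ B₂)
    (hBA : B₁ ⊂ A₁)
    (hfA : f (∑ i ∈ A₁, x i) = f (∑ i ∈ A₂, x i))
    (hfB : f (∑ i ∈ B₁, x i) = f (∑ i ∈ B₂, x i)) :
    (∑ i, x i > 2*θc ∧ 2*θc > 6*π/5) ∧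
    ((∑ i ∈ A₁, x i = ∑ i ∈ A₂, x i) ∧ ¬(∑ i ∈ B₁, x i = ∑ i ∈ B₂, x i) ∧ ¬(∑ i ∈ A₁, x i = ∑ i ∈ B₂, x i)
     ∨ ¬(∑ i ∈ A₁, x i = ∑ i ∈ A₂, x i) ∧ (∑ i ∈ B₁, x i = ∑ i ∈ B₂, x i) ∧ ¬(∑ i ∈ A₁, x i = ∑ i ∈ B₂, x i)
     ∨ ¬(∑ i ∈ A₁, x i = ∑ i ∈ A₂, x i) ∧ ¬(∑ i ∈ B₁, x i = ∑ i ∈ B₂, x i) ∧ (∑ i ∈ A₁, x i = ∑ i ∈ B₂, x i)) := by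
  have hA₂sum := sum_eq_sum_univ_sub_of_union_eq_univ hAunion hAdisj x
  have hB₂sum := sum_eq_sum_univ_sub_of_union_eq_univ hBunion hBdisj x
  have hA₂pos : 0 < ∑ i ∈ A₂, x i := Finset.sum_pos (fun i _ => hx i) hA₂
  rw [hA₂sum] at hfA hA₂pos ⊢
  rw [hB₂sum] at hfB ⊢
  set S := ∑ i, x i
  set a := ∑ i ∈ A₁, x i
  set b := ∑ i ∈ B₁, x i
  have hb : 0 < b := Finset.sum_pos (fun i _ => hx i) hB₁
  have hba : b < a := by
    obtain ⟨i, hiA, hiB⟩ := Finset.exists_of_ssubset hBA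
    exact Finset.sum_lt_sum_of_subset hBA.subset hiA hiB (hx i) (fun j _ _ => (hx j).le)
  have haS : a < S := sub_pos.1 hA₂pos
  have hθc' : f' θc = 0 := (hasDerivAt_f ⟨hθc.1, by linarith [hθc.2, pi_pos]⟩).deriv ▸ hcrit
  have hθS : 2 * θc < S := by
    by_cases ha : a = S - a
    · exact two_mul_lt_of_f_eq_f_reflect hθc hθc' hsum ⟨hb, hba.trans haS⟩ (by linarith) hfB
    · exact two_mul_lt_of_f_eq_f_reflect hθc hθc' hsum ⟨hb.trans hba, haS⟩ ha hfA
  have hθ := three_pi_div_five_lt_of_f'_eq_zero hθc hθc'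
  refine ⟨⟨hθS, by linarith⟩, ?_⟩
  rcases f_reflect_trichotomy hsum hb hba haS hfA hfB with h | h | h
  · exact Or.inl ⟨h, by intro; linarith, by intro; linarith⟩
  · exact Or.inr (Or.inl ⟨by intro; linarith, h, by intro; linarith⟩)
  · exact Or.inr (Or.inr ⟨by intro; linarith, by intro; linarith, h⟩)

theorem stmt11 (θc : ℝ) (hθc : θc ∈ Ioo (0:ℝ) π) (hcrit : deriv f θc = 0)
    (huniq : ∀ θ ∈ Ioo (0:ℝ) π, deriv f θ = 0 → θ = θc)
    (m : ℕ) (x : Fin m → ℝ) (hx : ∀ i, 0 < x i)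
    (hsum : ∑ i, x i ≤ 2*π)
    (A₁ A₂ B₁ B₂ : Finset (Fin m))
    (hA₁ : A₁.Nonempty) (hA₂ : A₂.Nonempty) (hB₁ : B₁.Nonempty) (hB₂ : B₂.Nonempty)
    (hAunion : A₁ ∪ A₂ = Finset.univ) (hAdisj : Disjoint A₁ A₂)
    (hBunion : B₁ ∪ B₂ = Finset.univ) (hBdisj : Disjoint B₁ B₂)
    (hBA : B₁ ⊂ A₁)
    (hfA : f (∑ i ∈ A₁, x i) = f (∑ i ∈ A₂, x i))
    (hfB : f (∑ i ∈ B₁, x i) = f (∑ i ∈ B₂, x i)) :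
    (∑ i, x i > 2*θc ∧ 2*θc > 6*π/5) ∧
    ((∑ i ∈ A₁, x i = ∑ i ∈ A₂, x i) ∧ ¬(∑ i ∈ B₁, x i = ∑ i ∈ B₂, x i) ∧ ¬(∑ i ∈ A₁, x i = ∑ i ∈ B₂, x i)
     ∨ ¬(∑ i ∈ A₁, x i = ∑ i ∈ A₂, x i) ∧ (∑ i ∈ B₁, x i = ∑ i ∈ B₂, x i) ∧ ¬(∑ i ∈ A₁, x i = ∑ i ∈ B₂, x i)
     ∨ ¬(∑ i ∈ A₁, x i = ∑ i ∈ A₂, x i) ∧ ¬(∑ i ∈ B₁, x i = ∑ i ∈ B₂, x i) ∧ (∑ i ∈ A₁, x i = ∑ i ∈ B₂, x i)) :=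
  stmt11_general θc hθc hcrit m x hx hsum A₁ A₂ B₁ B₂ hA₂ hB₁ hAunion hAdisj hBunion hBdisj hBA hfA
    hfB
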